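/- Consider $p = P(X \geq \gamma \text{ or } X \leq -k\gamma)$ with $X \sim N(0,1)$ and constant $k \geq 3$, estimated by IS with distribution $N(\gamma,1)$ and estimator $Z = I\{X \geq \gamma \text{ or } X \leq -k\gamma\} e^{-\gamma X + \gamma^2/2}$. Then $\tilde E(Z^2) = e^{\gamma^2}(\bar\Phi(2\gamma) + \bar\Phi((k-1)\gamma))$ and $\tilde E(Z^2)/p^2 = \Theta(\gamma)$ as $\gamma\to\infty$; hence $Z$ is asymptotically efficient despite missing the dominating point $-k\gamma$. -/

import Mathlib

/-!
Squaring the likelihood ratio `e^{-γx + γ²/2}` against the `N(γ,1)` density gives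
`e^{γ²} φ(x + γ)`, so after the shift `t = x + γ` the second moment is `e^{γ²}` times the
standard normal mass of `{t ≥ 2γ} ∪ {t ≤ -(k-1)γ}`. Since `Φ̄` is decreasing, for `k ≥ 3` both `p`
and `Ẽ(Z²)` lie within a factor `2` of their first terms `Φ̄(γ)` and `e^{γ²} Φ̄(2γ)`. The
Mills-ratio bounds `e^{-3/2} φ(x)/x ≤ Φ̄(x) ≤ φ(x)/x` (for `x ≥ 1`) and the identity
`e^{γ²} φ(2γ) = √(2π) φ(γ)²` then give `e^{γ²} Φ̄(2γ) / Φ̄(γ)² = Θ(γ)`.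
-/

open MeasureTheory Real Set Filter

/-- Standard normal tail function. -/
noncomputable def PhiBar (x : ℝ) : ℝ :=
  ∫ t in Ici x, (Real.sqrt (2 * π))⁻¹ * Real.exp (-t ^ 2 / 2)

/-- Second moment of the one-point IS estimator for `P(X ≥ γ or X ≤ -kγ)`
under the IS distribution `N(γ,1)`. -/
noncomputable def secondMoment (k γ : ℝ) : ℝ :=
  ∫ x in {x : ℝ | γ ≤ x ∨ x ≤ -k * γ},
    (Real.exp (-γ * x + γ ^ 2 / 2)) ^ 2 *
      ((Real.sqrt (2 * π))⁻¹ * Real.exp (-(x - γ) ^ 2 / 2))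

open ProbabilityTheory Topology

lemma div_sq_bounds_of_le_two_mul {a A b B : ℝ} (ha : 0 < a) (hA : a ≤ A) (hA' : A ≤ 2 * a)
    (hB : b ≤ B) (hB' : B ≤ 2 * b) :
    b / a ^ 2 / 4 ≤ B / A ^ 2 ∧ B / A ^ 2 ≤ 2 * (b / a ^ 2) := by
  have hb : 0 ≤ b := by linarith
  have hA0 : 0 < A := by linarith
  have hB0 : 0 ≤ B := by linarith
  constructor
  · calc b / a ^ 2 / 4 = b / (2 * a) ^ 2 := by ring
      _ ≤ B / A ^ 2 := by gcongr
  · calc B / A ^ 2 ≤ 2 * b / a ^ 2 := by gcongr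
      _ = 2 * (b / a ^ 2) := by ring

local notation "φ" => gaussianPDFReal 0 1

lemma gaussianPDFReal_zero_one : φ = fun x => (√(2 * π))⁻¹ * rexp (-x ^ 2 / 2) := by
  ext x; simp [gaussianPDFReal]

lemma gaussianPDFReal_zero_one_neg (x : ℝ) : φ (-x) = φ x := by
  simp [gaussianPDFReal_zero_one]

lemma hasDerivAt_gaussianPDFReal_zero_one (x : ℝ) : HasDerivAt φ (-x * φ x) x := by
  have h : HasDerivAt (fun t : ℝ => -t ^ 2 / 2) (-x) x := by
    convert (hasDerivAt_pow 2 x).const_mul (-1 / 2 : ℝ) using 1 <;> first | (ext; ring) | ring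
  have := h.exp.const_mul (√(2 * π))⁻¹
  rw [← gaussianPDFReal_zero_one] at this
  exact this.congr_deriv (by rw [gaussianPDFReal_zero_one]; ring)

lemma tendsto_gaussianPDFReal_zero_one_atTop : Tendsto φ atTop (𝓝 0) := by
  rw [gaussianPDFReal_zero_one]
  have : Tendsto (fun t : ℝ => -t ^ 2 / 2) atTop atBot := by
    simpa only [neg_div, Function.comp_def] using tendsto_neg_atTop_atBot.comp
      ((tendsto_pow_atTop two_ne_zero).atTop_div_const (two_pos : (0 : ℝ) < 2))
  simpa using (tendsto_exp_atBot.comp this).const_mul (√(2 * π))⁻¹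

lemma integrable_mul_gaussianPDFReal_zero_one : Integrable fun t => t * φ t := by
  have := (integrable_mul_exp_neg_mul_sq (b := 1 / 2) one_half_pos).const_mul (√(2 * π))⁻¹
  simp only [gaussianPDFReal_zero_one]
  convert this using 2 with t
  ring_nf

lemma gaussianPDFReal_zero_one_antitoneOn : AntitoneOn φ (Ici 0) := by
  intro s hs t ht hst
  simp only [gaussianPDFReal_zero_one]
  gcongr

lemma gaussianPDFReal_zero_one_add (x h : ℝ) :
    φ (x + h) = φ x * rexp (-(x * h + h ^ 2 / 2)) := by
  simp only [gaussianPDFReal_zero_one, mul_assoc, ← exp_add]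
  ring_nf

lemma exp_neg_three_halves_mul_le_gaussianPDFReal_add_inv {x : ℝ} (hx : 1 ≤ x) :
    rexp (-(3 / 2)) * φ x ≤ φ (x + x⁻¹) := by
  have hx0 : x ≠ 0 := by positivity
  have hinv : x⁻¹ ^ 2 ≤ 1 := pow_le_one₀ (by positivity) (inv_le_one_of_one_le₀ hx)
  rw [gaussianPDFReal_zero_one_add, mul_comm, mul_inv_cancel₀ hx0]
  exact mul_le_mul_of_nonneg_left (exp_le_exp.2 (by linarith)) (gaussianPDFReal_nonneg 0 1 x)

lemma exp_sq_mul_gaussianPDFReal_two_mul (γ : ℝ) :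
    rexp (γ ^ 2) * φ (2 * γ) = √(2 * π) * φ γ ^ 2 := by
  have hexp : rexp (γ ^ 2) * rexp (-(2 * γ) ^ 2 / 2) = rexp (-γ ^ 2 / 2) ^ 2 := by
    rw [← exp_add, ← exp_nat_mul]
    ring_nf
  have hs : √(2 * π) ≠ 0 := by positivity
  simp only [gaussianPDFReal_zero_one, mul_pow, inv_pow, ← hexp]
  field_simp

lemma PhiBar_eq_integral_Ioi (x : ℝ) : PhiBar x = ∫ t in Ioi x, φ t := by
  simp only [PhiBar, gaussianPDFReal_zero_one, integral_Ici_eq_integral_Ioi]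

lemma PhiBar_antitone : Antitone PhiBar := fun x y hxy => by
  simp only [PhiBar_eq_integral_Ioi]
  exact setIntegral_mono_set (integrable_gaussianPDFReal 0 1).integrableOn
    (.of_forall fun t => gaussianPDFReal_nonneg 0 1 t) (Ioi_subset_Ioi hxy).eventuallyLE

lemma integral_Iic_gaussianPDFReal_zero_one (a : ℝ) : ∫ t in Iic a, φ t = PhiBar (-a) := by
  rw [PhiBar_eq_integral_Ioi, ← integral_comp_neg_Iic]
  simp only [gaussianPDFReal_zero_one_neg]

lemma integral_Ioi_mul_gaussianPDFReal_zero_one (x : ℝ) : ∫ t in Ioi x, t * φ t = φ x := by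
  simpa using integral_Ioi_of_hasDerivAt_of_tendsto' (a := x) (m := 0) (f := fun t => -φ t)
    (fun t _ => (hasDerivAt_gaussianPDFReal_zero_one t).neg)
    (by simpa using integrable_mul_gaussianPDFReal_zero_one.integrableOn)
    (by simpa using tendsto_gaussianPDFReal_zero_one_atTop.neg)

lemma PhiBar_le_gaussianPDFReal_div {x : ℝ} (hx : 0 < x) : PhiBar x ≤ φ x / x := by
  rw [PhiBar_eq_integral_Ioi, ← integral_Ioi_mul_gaussianPDFReal_zero_one, ← integral_div]
  refine setIntegral_mono_on (integrable_gaussianPDFReal 0 1).integrableOn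
    (integrable_mul_gaussianPDFReal_zero_one.integrableOn.div_const x) measurableSet_Ioi
    fun t ht => ?_
  rw [le_div_iff₀ hx, mul_comm]
  exact mul_le_mul_of_nonneg_right (le_of_lt ht) (gaussianPDFReal_nonneg 0 1 t)

lemma exp_neg_three_halves_mul_div_le_PhiBar {x : ℝ} (hx : 1 ≤ x) :
    rexp (-(3 / 2)) * (φ x / x) ≤ PhiBar x := by
  have hx0 : 0 < x := by positivity
  calc rexp (-(3 / 2)) * (φ x / x) ≤ φ (x + x⁻¹) * volume.real (Ioc x (x + x⁻¹)) := by
        rw [volume_real_Ioc_of_le (by simp [hx0.le]), add_sub_cancel_left, mul_div_assoc',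
          div_eq_mul_inv]
        gcongr
        exact exp_neg_three_halves_mul_le_gaussianPDFReal_add_inv hx
    _ ≤ ∫ t in Ioc x (x + x⁻¹), φ t :=
        setIntegral_ge_of_const_le_real measurableSet_Ioc measure_Ioc_lt_top.ne
          (fun t ht => gaussianPDFReal_zero_one_antitoneOn (mem_Ici.2 (hx0.le.trans ht.1.le))
            (mem_Ici.2 (by positivity)) ht.2)
          (integrable_gaussianPDFReal 0 1).integrableOn
    _ ≤ PhiBar x := by
        rw [PhiBar_eq_integral_Ioi]
        exact setIntegral_mono_set (integrable_gaussianPDFReal 0 1).integrableOn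
          (.of_forall fun t => gaussianPDFReal_nonneg 0 1 t) Ioc_subset_Ioi_self.eventuallyLE

lemma PhiBar_pos (x : ℝ) : 0 < PhiBar x := by
  have hφ := gaussianPDFReal_pos 0 1 (max x 1) one_ne_zero
  calc 0 < rexp (-(3 / 2)) * (φ (max x 1) / max x 1) := by positivity
    _ ≤ PhiBar (max x 1) := exp_neg_three_halves_mul_div_le_PhiBar (le_max_right x 1)
    _ ≤ PhiBar x := PhiBar_antitone (le_max_left x 1)

lemma secondMoment_integrand_eq (γ x : ℝ) :
    rexp (-γ * x + γ ^ 2 / 2) ^ 2 * ((√(2 * π))⁻¹ * rexp (-(x - γ) ^ 2 / 2)) =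
      rexp (γ ^ 2) * φ (x + γ) := by
  rw [gaussianPDFReal_zero_one, ← exp_nat_mul, mul_left_comm, ← exp_add, mul_left_comm,
    ← exp_add]
  congr 2
  push_cast
  ring

lemma secondMoment_eq {k γ : ℝ} (hk : -1 < k) (hγ : 0 < γ) :
    secondMoment k γ = rexp (γ ^ 2) * (PhiBar (2 * γ) + PhiBar ((k - 1) * γ)) := by
  have hshift : {x : ℝ | γ ≤ x ∨ x ≤ -k * γ} =
      (· + γ) ⁻¹' (Ici (2 * γ) ∪ Iic (-((k - 1) * γ))) := by
    ext x
    simp only [mem_ofPred_eq, mem_preimage, mem_union, mem_Ici, mem_Iic]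
    constructor <;> rintro (h | h) <;> [left; right; left; right] <;> linarith
  have hdisj : Disjoint (Ici (2 * γ)) (Iic (-((k - 1) * γ))) :=
    Ici_disjoint_Iic.2 (by nlinarith)
  simp_rw [secondMoment, secondMoment_integrand_eq, integral_const_mul, hshift,
    (measurePreserving_add_right volume γ).setIntegral_preimage_emb
      (measurableEmbedding_addRight γ),
    setIntegral_union hdisj measurableSet_Iic (integrable_gaussianPDFReal 0 1).integrableOn
      (integrable_gaussianPDFReal 0 1).integrableOn,
    integral_Iic_gaussianPDFReal_zero_one, neg_neg, PhiBar_eq_integral_Ioi,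
    integral_Ici_eq_integral_Ioi]

lemma exp_sq_mul_PhiBar_two_mul_div_PhiBar_sq_bounds {γ : ℝ} (hγ : 1 ≤ γ) :
    √(2 * π) / (2 * rexp (3 / 2)) * γ ≤ rexp (γ ^ 2) * PhiBar (2 * γ) / PhiBar γ ^ 2 ∧
      rexp (γ ^ 2) * PhiBar (2 * γ) / PhiBar γ ^ 2 ≤
        √(2 * π) * rexp (3 / 2) ^ 2 / 2 * γ := by
  have hγ0 : 0 < γ := by positivity
  have hu : 0 < φ γ := gaussianPDFReal_pos 0 1 γ one_ne_zero
  have ha := exp_neg_three_halves_mul_div_le_PhiBar hγ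
  have ha' := PhiBar_le_gaussianPDFReal_div hγ0
  have hB := exp_neg_three_halves_mul_div_le_PhiBar (by linarith : 1 ≤ 2 * γ)
  have hB' := PhiBar_le_gaussianPDFReal_div (by linarith : 0 < 2 * γ)
  rw [exp_neg] at ha hB
  have hE : 0 ≤ rexp (γ ^ 2) := (exp_pos _).le
  have hB1 : (rexp (3 / 2))⁻¹ * (√(2 * π) * φ γ ^ 2 / (2 * γ)) ≤
      rexp (γ ^ 2) * PhiBar (2 * γ) := by
    rw [← exp_sq_mul_gaussianPDFReal_two_mul]
    exact (mul_le_mul_of_nonneg_left hB hE).trans_eq' (by ring)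
  have hB2 : rexp (γ ^ 2) * PhiBar (2 * γ) ≤ √(2 * π) * φ γ ^ 2 / (2 * γ) := by
    rw [← exp_sq_mul_gaussianPDFReal_two_mul, mul_div_assoc]
    exact mul_le_mul_of_nonneg_left hB' hE
  have ha0 := PhiBar_pos γ
  constructor
  · rw [le_div_iff₀ (by positivity)]
    calc √(2 * π) / (2 * rexp (3 / 2)) * γ * PhiBar γ ^ 2
        ≤ √(2 * π) / (2 * rexp (3 / 2)) * γ * (φ γ / γ) ^ 2 := by gcongr
      _ = (rexp (3 / 2))⁻¹ * (√(2 * π) * φ γ ^ 2 / (2 * γ)) := by field_simp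
      _ ≤ _ := hB1
  · rw [div_le_iff₀ (by positivity)]
    calc rexp (γ ^ 2) * PhiBar (2 * γ) ≤ √(2 * π) * φ γ ^ 2 / (2 * γ) := hB2
      _ = √(2 * π) * rexp (3 / 2) ^ 2 / 2 * γ * ((rexp (3 / 2))⁻¹ * (φ γ / γ)) ^ 2 := by
        field_simp
      _ ≤ _ := by gcongr

/-- for `k ≥ 3`, `Ẽ(Z²) = e^{γ²}(Φ̄(2γ) + Φ̄((k-1)γ))` and
`Ẽ(Z²)/p² = Θ(γ)` as `γ → ∞`, where `p = Φ̄(γ) + Φ̄(kγ)`; hence the IS estimator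
is asymptotically efficient despite missing the dominating point `-kγ`. -/
theorem IS_efficient_for_k_ge_three (k : ℝ) (hk : 3 ≤ k) :
    (∀ γ : ℝ, 0 < γ →
      secondMoment k γ = Real.exp (γ ^ 2) * (PhiBar (2 * γ) + PhiBar ((k - 1) * γ))) ∧
    ∃ c₁ c₂ : ℝ, 0 < c₁ ∧ 0 < c₂ ∧ ∀ᶠ γ in atTop,
      c₁ * γ ≤ secondMoment k γ / (PhiBar γ + PhiBar (k * γ)) ^ 2 ∧
      secondMoment k γ / (PhiBar γ + PhiBar (k * γ)) ^ 2 ≤ c₂ * γ := by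
  have hM : ∀ γ : ℝ, 0 < γ →
      secondMoment k γ = rexp (γ ^ 2) * (PhiBar (2 * γ) + PhiBar ((k - 1) * γ)) :=
    fun γ hγ => secondMoment_eq (by linarith) hγ
  refine ⟨hM, √(2 * π) / (2 * rexp (3 / 2)) / 4, 2 * (√(2 * π) * rexp (3 / 2) ^ 2 / 2),
    by positivity, by positivity, ?_⟩
  filter_upwards [eventually_ge_atTop 1] with γ hγ
  obtain ⟨hlow, hupp⟩ := exp_sq_mul_PhiBar_two_mul_div_PhiBar_sq_bounds hγ
  have hp : PhiBar (k * γ) ≤ PhiBar γ := PhiBar_antitone (by nlinarith)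
  have hA : PhiBar ((k - 1) * γ) ≤ PhiBar (2 * γ) := PhiBar_antitone (by nlinarith)
  have hM' := hM γ (by positivity)
  obtain ⟨h₁, h₂⟩ := div_sq_bounds_of_le_two_mul (a := PhiBar γ)
    (A := PhiBar γ + PhiBar (k * γ)) (b := rexp (γ ^ 2) * PhiBar (2 * γ))
    (B := secondMoment k γ) (PhiBar_pos γ) (by linarith [PhiBar_pos (k * γ)]) (by linarith)
    (by rw [hM']; gcongr; linarith [PhiBar_pos ((k - 1) * γ)])
    (by rw [hM', mul_left_comm]; gcongr; linarith)
  constructor <;> linarith
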